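/- Let A and B be non-negative contractions on a Hilbert space and t ∈ (0,1). Equality λ₁(A ⋆_t B) = t·λ₁(A) + (1−t)·λ₁(B) holds if and only if there exists a unit vector φ with Aφ = λ₁(A)·φ and Bφ = λ₁(B)·φ, where A ⋆_t B = t·A + (1−t)·B + i·√(t(1−t))·[A,B]. -/

import Mathlib

open Matrix ComplexOrder

/-- Eigenvalues of a Hermitian matrix listed in non-increasing order:
`eigDesc hA j` is the `j`-th largest eigenvalue of `A`. -/
noncomputable def eigDesc {n : ℕ} {A : Matrix (Fin n) (Fin n) ℂ} (hA : A.IsHermitian) :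
    Fin n → ℝ :=
  fun j => hA.eigenvalues (Tuple.sort hA.eigenvalues (Fin.rev j))

/-- The partial-swap convolution `A ⋆_t B = tA + (1-t)B + i√(t(1-t))[A,B]`. -/
noncomputable def pswap {n : ℕ} (t : ℝ) (A B : Matrix (Fin n) (Fin n) ℂ) :
    Matrix (Fin n) (Fin n) ℂ :=
  (t : ℂ) • A + ((1 - t : ℝ) : ℂ) • B
    + (Complex.I * (Real.sqrt (t * (1 - t)) : ℂ)) • (A * B - B * A)

/-!
For a unit vector `φ` put `a = ⟪φ, Aφ⟫`, `b = ⟪φ, Bφ⟫`, `α = λ₁(A)`, `β = λ₁(B)`. As `A` and `B` are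
Hermitian, `Re ⟪φ, (A ⋆ₜ B) φ⟫ = t a + (1 - t) b - 2 √(t(1-t)) Im ⟪Aφ, Bφ⟫`. The imaginary part
does not change when `Aφ`, `Bφ` are replaced by their components orthogonal to `φ`, so by
Cauchy–Schwarz its square is at most `(‖Aφ‖² - a²)(‖Bφ‖² - b²) ≤ a(α - a) · b(β - b)`, the last
step being `A² ≤ αA`. AM–GM and `ab ≤ 1` then give `Re ⟪φ, (A ⋆ₜ B) φ⟫ ≤ tα + (1 - t)β`, with
equality only if `a = α` and `b = β`, which makes `φ` a top eigenvector of both `A` and `B`.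
Applied to a top eigenvector of `A ⋆ₜ B` this proves `λ₁(A ⋆ₜ B) ≤ tα + (1 - t)β` and the forward
implication; conversely, a common top eigenvector of `A` and `B` is killed by the commutator, so
it is an eigenvector of `A ⋆ₜ B` with eigenvalue `tα + (1 - t)β`.
-/

open scoped InnerProductSpace MatrixOrder

section InnerProductSpace

variable {E : Type*} [NormedAddCommGroup E] [InnerProductSpace ℂ E] {φ x y : E} {a b : ℝ}

lemma inner_sub_ofReal_smul_sub_ofReal_smul (hφ : ‖φ‖ = 1) (ha : ⟪φ, x⟫_ℂ = a)
    (hb : ⟪φ, y⟫_ℂ = b) :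
    ⟪x - (a : ℂ) • φ, y - (b : ℂ) • φ⟫_ℂ = ⟪x, y⟫_ℂ - (a * b : ℝ) := by
  have ha' : ⟪x, φ⟫_ℂ = a := by rw [← inner_conj_symm, ha, Complex.conj_ofReal]
  simp only [inner_sub_left, inner_sub_right, inner_smul_left, inner_smul_right, ha', hb,
    inner_self_eq_norm_sq_to_K, hφ, Complex.conj_ofReal]
  push_cast
  ring

lemma norm_sub_ofReal_smul_sq (hφ : ‖φ‖ = 1) (ha : ⟪φ, x⟫_ℂ = a) :
    ‖x - (a : ℂ) • φ‖ ^ 2 = ‖x‖ ^ 2 - a ^ 2 := by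
  rw [@norm_sq_eq_re_inner ℂ, @norm_sq_eq_re_inner ℂ _ _ _ _ x,
    inner_sub_ofReal_smul_sub_ofReal_smul hφ ha ha, map_sub, sq]
  simp

lemma im_inner_sq_le (hφ : ‖φ‖ = 1) (ha : ⟪φ, x⟫_ℂ = a) (hb : ⟪φ, y⟫_ℂ = b) :
    (⟪x, y⟫_ℂ).im ^ 2 ≤ (‖x‖ ^ 2 - a ^ 2) * (‖y‖ ^ 2 - b ^ 2) := by
  have him : (⟪x, y⟫_ℂ).im = (⟪x - (a : ℂ) • φ, y - (b : ℂ) • φ⟫_ℂ).im := by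
    rw [inner_sub_ofReal_smul_sub_ofReal_smul hφ ha hb, Complex.sub_im, Complex.ofReal_im,
      sub_zero]
  rw [← norm_sub_ofReal_smul_sq hφ ha, ← norm_sub_ofReal_smul_sq hφ hb, ← mul_pow, him,
    ← sq_abs]
  gcongr
  exact (Complex.abs_im_le_norm _).trans (norm_inner_le_norm _ _)

end InnerProductSpace

section Scalar

variable {t c w a b α β : ℝ}

lemma weighted_sum_sub_two_mul_le (ht0 : 0 ≤ t) (ht1 : t ≤ 1) (hc : c ^ 2 = t * (1 - t))
    (ha : 0 ≤ a) (haα : a ≤ α) (hα : α ≤ 1) (hbβ : b ≤ β) (hβ : β ≤ 1)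
    (hw : w ^ 2 ≤ a * (α - a) * (b * (β - b))) :
    t * a + (1 - t) * b - 2 * c * w ≤ t * α + (1 - t) * β := by
  have hX : 0 ≤ t * (α - a) := mul_nonneg ht0 (by linarith)
  have hY : 0 ≤ (1 - t) * (β - b) := mul_nonneg (by linarith) (by linarith)
  have hab : a * b ≤ 1 := by nlinarith
  have hsq : (2 * c * w) ^ 2 ≤ (t * (α - a) + (1 - t) * (β - b)) ^ 2 := by
    calc (2 * c * w) ^ 2 = 4 * c ^ 2 * w ^ 2 := by ring
      _ ≤ 4 * (t * (1 - t)) * (a * (α - a) * (b * (β - b))) := by rw [hc]; gcongr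
      _ = 4 * (a * b) * (t * (α - a) * ((1 - t) * (β - b))) := by ring
      _ ≤ 4 * (t * (α - a) * ((1 - t) * (β - b))) := by nlinarith [mul_nonneg hX hY]
      _ ≤ (t * (α - a) + (1 - t) * (β - b)) ^ 2 := by
        nlinarith [sq_nonneg (t * (α - a) - (1 - t) * (β - b))]
  linarith [neg_le.mp (abs_le_of_sq_le_sq' hsq (add_nonneg hX hY)).1]

lemma eq_and_eq_of_weighted_sum_sub_two_mul_eq (ht0 : 0 < t) (ht1 : t < 1)
    (hc : c ^ 2 = t * (1 - t)) (ha : 0 ≤ a) (haα : a ≤ α) (hα : α ≤ 1) (hb : 0 ≤ b)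
    (hbβ : b ≤ β) (hβ : β ≤ 1) (hw : w ^ 2 ≤ a * (α - a) * (b * (β - b)))
    (heq : t * a + (1 - t) * b - 2 * c * w = t * α + (1 - t) * β) :
    a = α ∧ b = β := by
  set X := t * (α - a)
  set Y := (1 - t) * (β - b)
  have hX : 0 ≤ X := mul_nonneg ht0.le (by linarith)
  have hY : 0 ≤ Y := mul_nonneg (by linarith) (by linarith)
  have hsq : (X + Y) ^ 2 ≤ a * b * (X + Y) ^ 2 := by
    calc (X + Y) ^ 2 = 4 * c ^ 2 * w ^ 2 := by
          rw [show X + Y = -(2 * c * w) by linarith]; ring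
      _ ≤ 4 * (t * (1 - t)) * (a * (α - a) * (b * (β - b))) := by rw [hc]; gcongr
      _ = 4 * (a * b) * (X * Y) := by ring
      _ ≤ a * b * (X + Y) ^ 2 := by nlinarith [mul_nonneg ha hb, sq_nonneg (X - Y)]
  -- `a * b ≥ 1` is only possible for `a = α = 1` and `b = β = 1`
  have hXY : X + Y = 0 := by
    by_contra hne
    have hpos : 0 < (X + Y) ^ 2 := pow_pos (lt_of_le_of_ne (add_nonneg hX hY) (Ne.symm hne)) 2
    have hab : 1 ≤ a * b := by nlinarith
    exact hne (by nlinarith)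
  constructor <;> nlinarith

end Scalar

section Matrix

variable {ι : Type*} [Fintype ι] {M N : Matrix ι ι ℂ} {φ : ι → ℂ}

lemma star_dotProduct_eq_inner (x y : ι → ℂ) :
    star x ⬝ᵥ y = ⟪(WithLp.toLp 2 x : EuclideanSpace ℂ ι), WithLp.toLp 2 y⟫_ℂ := by
  rw [EuclideanSpace.inner_toLp_toLp, dotProduct_comm]

lemma re_star_dotProduct_self (x : ι → ℂ) :
    (star x ⬝ᵥ x).re = ‖(WithLp.toLp 2 x : EuclideanSpace ℂ ι)‖ ^ 2 := by
  rw [star_dotProduct_eq_inner, @norm_sq_eq_re_inner ℂ, RCLike.re_to_complex]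

lemma norm_toLp_eq_one (hφ : ∑ i, ‖φ i‖ ^ 2 = 1) :
    ‖(WithLp.toLp 2 φ : EuclideanSpace ℂ ι)‖ = 1 := by
  simp [EuclideanSpace.norm_eq, hφ]

lemma star_dotProduct_self_eq_one (hφ : ∑ i, ‖φ i‖ ^ 2 = 1) : star φ ⬝ᵥ φ = 1 := by
  rw [star_dotProduct_eq_inner, inner_self_eq_norm_sq_to_K, norm_toLp_eq_one hφ]
  simp

lemma re_star_dotProduct_mulVec_of_mulVec_eq {r : ℝ} (hφ : ∑ i, ‖φ i‖ ^ 2 = 1)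
    (h : M *ᵥ φ = (r : ℂ) • φ) : (star φ ⬝ᵥ (M *ᵥ φ)).re = r := by
  simp [h, star_dotProduct_self_eq_one hφ]

lemma Matrix.IsHermitian.star_dotProduct_mulVec_self (hM : M.IsHermitian) (x : ι → ℂ) :
    star x ⬝ᵥ (M *ᵥ x) = ((star x ⬝ᵥ (M *ᵥ x)).re : ℂ) :=
  Complex.ext (by simp) (by simpa using hM.im_star_dotProduct_mulVec_self x)

lemma Matrix.IsHermitian.star_dotProduct_mulVec (hM : M.IsHermitian) (x y : ι → ℂ) :
    star x ⬝ᵥ (M *ᵥ y) = star (M *ᵥ x) ⬝ᵥ y := by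
  rw [star_mulVec, hM.eq, dotProduct_mulVec]

lemma re_star_dotProduct_mulVec_nonneg (h : 0 ≤ M) (x : ι → ℂ) :
    0 ≤ (star x ⬝ᵥ (M *ᵥ x)).re :=
  h.posSemidef.re_dotProduct_nonneg x

lemma re_star_dotProduct_mulVec_le_of_le (h : M ≤ N) (x : ι → ℂ) :
    (star x ⬝ᵥ (M *ᵥ x)).re ≤ (star x ⬝ᵥ (N *ᵥ x)).re := by
  have := re_star_dotProduct_mulVec_nonneg (sub_nonneg.mpr h) x
  rwa [sub_mulVec, dotProduct_sub, Complex.sub_re, sub_nonneg] at this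

variable [DecidableEq ι] {A B : Matrix ι ι ℂ} {α β : ℝ}

lemma re_star_dotProduct_mulVec_le (h : M ≤ α • 1) (hφ : ∑ i, ‖φ i‖ ^ 2 = 1) :
    (star φ ⬝ᵥ (M *ᵥ φ)).re ≤ α := by
  simpa [smul_mulVec, star_dotProduct_self_eq_one hφ] using re_star_dotProduct_mulVec_le_of_le h φ

lemma mul_self_le_smul_of_le (hA : 0 ≤ A) (h : A ≤ α • 1) : A * A ≤ α • A := by
  obtain ⟨S, hS, rfl⟩ : ∃ S, 0 ≤ S ∧ S * S = A :=
    ⟨CFC.sqrt A, CFC.sqrt_nonneg A, CFC.sqrt_mul_sqrt_self A hA⟩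
  simpa only [mul_assoc, mul_smul_comm, smul_mul_assoc, mul_one] using
    conjugate_le_conjugate_of_nonneg h hS

lemma re_star_mulVec_dotProduct_mulVec_self_le (hA : 0 ≤ A) (h : A ≤ α • 1) (x : ι → ℂ) :
    (star (A *ᵥ x) ⬝ᵥ (A *ᵥ x)).re ≤ α * (star x ⬝ᵥ (A *ᵥ x)).re := by
  have := re_star_dotProduct_mulVec_le_of_le (mul_self_le_smul_of_le hA h) x
  rwa [← mulVec_mulVec, hA.posSemidef.isHermitian.star_dotProduct_mulVec, smul_mulVec,
    dotProduct_smul, Complex.real_smul, Complex.re_ofReal_mul] at this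

lemma im_star_mulVec_dotProduct_mulVec_sq_le (hA : 0 ≤ A) (hAα : A ≤ α • 1) (hB : 0 ≤ B)
    (hBβ : B ≤ β • 1) (hφ : ∑ i, ‖φ i‖ ^ 2 = 1) :
    (star (A *ᵥ φ) ⬝ᵥ (B *ᵥ φ)).im ^ 2 ≤
      (star φ ⬝ᵥ (A *ᵥ φ)).re * (α - (star φ ⬝ᵥ (A *ᵥ φ)).re) *
        ((star φ ⬝ᵥ (B *ᵥ φ)).re * (β - (star φ ⬝ᵥ (B *ᵥ φ)).re)) := by
  set a := (star φ ⬝ᵥ (A *ᵥ φ)).re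
  set b := (star φ ⬝ᵥ (B *ᵥ φ)).re
  have hψ := norm_toLp_eq_one hφ
  have ha := (star_dotProduct_eq_inner _ _).symm.trans
    (hA.posSemidef.isHermitian.star_dotProduct_mulVec_self φ)
  have hb := (star_dotProduct_eq_inner _ _).symm.trans
    (hB.posSemidef.isHermitian.star_dotProduct_mulVec_self φ)
  have hxa := re_star_mulVec_dotProduct_mulVec_self_le hA hAα φ
  have hyb := re_star_mulVec_dotProduct_mulVec_self_le hB hBβ φ
  rw [re_star_dotProduct_self] at hxa hyb
  have hx0 := norm_sub_ofReal_smul_sq hψ ha ▸ sq_nonneg _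
  have hy0 := norm_sub_ofReal_smul_sq hψ hb ▸ sq_nonneg _
  rw [star_dotProduct_eq_inner (A *ᵥ φ)]
  refine (im_inner_sq_le hψ ha hb).trans (mul_le_mul ?_ ?_ hy0 ?_) <;> nlinarith

lemma mulVec_eq_smul_of_re_star_dotProduct_mulVec_eq (hA : 0 ≤ A) (hAα : A ≤ α • 1)
    (hφ : ∑ i, ‖φ i‖ ^ 2 = 1) (h : (star φ ⬝ᵥ (A *ᵥ φ)).re = α) : A *ᵥ φ = (α : ℂ) • φ := by
  have ha := (star_dotProduct_eq_inner _ _).symm.trans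
    (hA.posSemidef.isHermitian.star_dotProduct_mulVec_self φ)
  rw [h] at ha
  have hxa := re_star_mulVec_dotProduct_mulVec_self_le hA hAα φ
  rw [re_star_dotProduct_self, h] at hxa
  have h0 : ‖WithLp.toLp 2 (A *ᵥ φ) - (α : ℂ) • WithLp.toLp 2 φ‖ ^ 2 ≤ 0 := by
    rw [norm_sub_ofReal_smul_sq (norm_toLp_eq_one hφ) ha]
    linarith
  rwa [← WithLp.toLp_smul, ← WithLp.toLp_sub, sq_nonpos_iff, norm_eq_zero,
    WithLp.toLp_eq_zero, sub_eq_zero] at h0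

end Matrix

section TopEigenvalue

variable {n : ℕ} [NeZero n] {M : Matrix (Fin n) (Fin n) ℂ}

lemma eigenvalues_le_eigDesc_zero (hM : M.IsHermitian) (i : Fin n) :
    hM.eigenvalues i ≤ eigDesc hM 0 := by
  obtain ⟨j, rfl⟩ := (Tuple.sort hM.eigenvalues).surjective i
  refine Tuple.monotone_sort hM.eigenvalues ?_
  rw [Fin.le_def, Fin.val_rev, Fin.val_zero]
  omega

lemma le_eigDesc_zero_smul_one (hM : M.IsHermitian) : M ≤ eigDesc hM 0 • 1 := by
  rw [← Algebra.algebraMap_eq_smul_one]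
  refine le_algebraMap_of_spectrum_le fun r hr => ?_
  obtain ⟨i, rfl⟩ := hM.spectrum_real_eq_range_eigenvalues ▸ hr
  exact eigenvalues_le_eigDesc_zero hM i

lemma exists_mulVec_eq_eigDesc_zero_smul (hM : M.IsHermitian) :
    ∃ φ : Fin n → ℂ, ∑ i, ‖φ i‖ ^ 2 = 1 ∧ M *ᵥ φ = (eigDesc hM 0 : ℂ) • φ := by
  let j := Tuple.sort hM.eigenvalues (Fin.rev 0)
  refine ⟨hM.eigenvectorBasis j, ?_, hM.mulVec_eigenvectorBasis j⟩
  rw [← EuclideanSpace.norm_sq_eq, hM.eigenvectorBasis.orthonormal.1 j, one_pow]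

lemma eigDesc_zero_le {α : ℝ} (hM : M.IsHermitian) (h : M ≤ α • 1) : eigDesc hM 0 ≤ α := by
  obtain ⟨φ, hφ, hMφ⟩ := exists_mulVec_eq_eigDesc_zero_smul hM
  rw [← re_star_dotProduct_mulVec_of_mulVec_eq hφ hMφ]
  exact re_star_dotProduct_mulVec_le h hφ

end TopEigenvalue

section PartialSwap

variable {n : ℕ} {t α β : ℝ} {A B : Matrix (Fin n) (Fin n) ℂ} {φ : Fin n → ℂ}

lemma re_star_dotProduct_pswap_mulVec (hA : A.IsHermitian) (hB : B.IsHermitian)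
    (x : Fin n → ℂ) :
    (star x ⬝ᵥ (pswap t A B *ᵥ x)).re =
      t * (star x ⬝ᵥ (A *ᵥ x)).re + (1 - t) * (star x ⬝ᵥ (B *ᵥ x)).re
        - 2 * √(t * (1 - t)) * (star (A *ᵥ x) ⬝ᵥ (B *ᵥ x)).im := by
  have hAB : star x ⬝ᵥ (A *ᵥ (B *ᵥ x)) = star (A *ᵥ x) ⬝ᵥ (B *ᵥ x) :=
    hA.star_dotProduct_mulVec _ _
  have hBA : star x ⬝ᵥ (B *ᵥ (A *ᵥ x)) = star (star (A *ᵥ x) ⬝ᵥ (B *ᵥ x)) := by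
    rw [hB.star_dotProduct_mulVec, Matrix.star_dotProduct]
  simp only [pswap, add_mulVec, smul_mulVec, sub_mulVec, ← mulVec_mulVec, dotProduct_add,
    dotProduct_smul, dotProduct_sub, hAB, hBA, Complex.star_def, Complex.sub_conj, smul_eq_mul,
    Complex.add_re, Complex.mul_re, Complex.mul_im, Complex.ofReal_re, Complex.ofReal_im,
    Complex.I_re, Complex.I_im]
  ring

lemma pswap_mulVec_of_mulVec_eq (hAφ : A *ᵥ φ = (α : ℂ) • φ) (hBφ : B *ᵥ φ = (β : ℂ) • φ) :
    pswap t A B *ᵥ φ = ((t * α + (1 - t) * β : ℝ) : ℂ) • φ := by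
  simp only [pswap, add_mulVec, smul_mulVec, sub_mulVec, ← mulVec_mulVec, hAφ, hBφ, mulVec_smul,
    smul_smul, mul_comm (α : ℂ), sub_self, smul_zero, add_zero, ← add_smul]
  congr 1
  push_cast
  ring

lemma re_star_dotProduct_pswap_mulVec_le (ht : t ∈ Set.Icc (0 : ℝ) 1) (hA : 0 ≤ A)
    (hAα : A ≤ α • 1) (hα : α ≤ 1) (hB : 0 ≤ B) (hBβ : B ≤ β • 1) (hβ : β ≤ 1)
    (hφ : ∑ i, ‖φ i‖ ^ 2 = 1) :
    (star φ ⬝ᵥ (pswap t A B *ᵥ φ)).re ≤ t * α + (1 - t) * β := by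
  rw [re_star_dotProduct_pswap_mulVec hA.posSemidef.isHermitian hB.posSemidef.isHermitian]
  exact weighted_sum_sub_two_mul_le ht.1 ht.2 (Real.sq_sqrt (by nlinarith [ht.1, ht.2]))
    (re_star_dotProduct_mulVec_nonneg hA φ) (re_star_dotProduct_mulVec_le hAα hφ) hα
    (re_star_dotProduct_mulVec_le hBβ hφ) hβ
    (im_star_mulVec_dotProduct_mulVec_sq_le hA hAα hB hBβ hφ)

lemma mulVec_eq_smul_of_re_star_dotProduct_pswap_mulVec_eq (ht : t ∈ Set.Ioo (0 : ℝ) 1)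
    (hA : 0 ≤ A) (hAα : A ≤ α • 1) (hα : α ≤ 1) (hB : 0 ≤ B) (hBβ : B ≤ β • 1) (hβ : β ≤ 1)
    (hφ : ∑ i, ‖φ i‖ ^ 2 = 1)
    (heq : (star φ ⬝ᵥ (pswap t A B *ᵥ φ)).re = t * α + (1 - t) * β) :
    A *ᵥ φ = (α : ℂ) • φ ∧ B *ᵥ φ = (β : ℂ) • φ := by
  rw [re_star_dotProduct_pswap_mulVec hA.posSemidef.isHermitian hB.posSemidef.isHermitian]
    at heq
  obtain ⟨ha, hb⟩ := eq_and_eq_of_weighted_sum_sub_two_mul_eq ht.1 ht.2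
    (Real.sq_sqrt (by nlinarith [ht.1, ht.2])) (re_star_dotProduct_mulVec_nonneg hA φ)
    (re_star_dotProduct_mulVec_le hAα hφ) hα (re_star_dotProduct_mulVec_nonneg hB φ)
    (re_star_dotProduct_mulVec_le hBβ hφ) hβ
    (im_star_mulVec_dotProduct_mulVec_sq_le hA hAα hB hBβ hφ) heq
  exact ⟨mulVec_eq_smul_of_re_star_dotProduct_mulVec_eq hA hAα hφ ha,
    mulVec_eq_smul_of_re_star_dotProduct_mulVec_eq hB hBβ hφ hb⟩

end PartialSwap

theorem stmt_3 {n : ℕ} [NeZero n] (t : ℝ) (ht : t ∈ Set.Ioo (0 : ℝ) 1)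
    (A B : Matrix (Fin n) (Fin n) ℂ)
    (hA : A.PosSemidef) (hB : B.PosSemidef)
    (hA1 : (1 - A).PosSemidef) (hB1 : (1 - B).PosSemidef)
    (hC : (pswap t A B).IsHermitian) :
    eigDesc hC 0 = t * eigDesc hA.isHermitian 0 + (1 - t) * eigDesc hB.isHermitian 0 ↔
      ∃ φ : Fin n → ℂ, (∑ i, ‖φ i‖ ^ 2 = 1) ∧
        A *ᵥ φ = (eigDesc hA.isHermitian 0 : ℂ) • φ ∧
        B *ᵥ φ = (eigDesc hB.isHermitian 0 : ℂ) • φ := by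
  have hAα := le_eigDesc_zero_smul_one hA.isHermitian
  have hBβ := le_eigDesc_zero_smul_one hB.isHermitian
  have hα := eigDesc_zero_le hA.isHermitian (α := 1) (by rwa [one_smul])
  have hβ := eigDesc_zero_le hB.isHermitian (α := 1) (by rwa [one_smul])
  obtain ⟨ψ, hψ, hCψ⟩ := exists_mulVec_eq_eigDesc_zero_smul hC
  have hCψ_re := re_star_dotProduct_mulVec_of_mulVec_eq hψ hCψ
  constructor
  · intro heq
    exact ⟨ψ, hψ, mulVec_eq_smul_of_re_star_dotProduct_pswap_mulVec_eq ht hA.nonneg hAα hα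
      hB.nonneg hBβ hβ hψ (hCψ_re.trans heq)⟩
  · rintro ⟨φ, hφ, hAφ, hBφ⟩
    refine le_antisymm ?_ ?_
    · rw [← hCψ_re]
      exact re_star_dotProduct_pswap_mulVec_le (Set.Ioo_subset_Icc_self ht) hA.nonneg hAα hα
        hB.nonneg hBβ hβ hψ
    · rw [← re_star_dotProduct_mulVec_of_mulVec_eq hφ (pswap_mulVec_of_mulVec_eq hAφ hBφ)]
      exact re_star_dotProduct_mulVec_le (le_eigDesc_zero_smul_one hC) hφ
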